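/- arXiv:0812.3036 — 4 statements merged into one kernel-verified Lean document; each statement's English description precedes it below -/
import Mathlib

section
/- Let m ≥ 1 and let t₁, …, t_k be real m×m matrices that are skew-symmetric (tᵢᵀ = −tᵢ), pairwise commuting (tᵢtⱼ = tⱼtᵢ for all i, j), and linearly independent over ℝ. Then k ≤ ⌊m/2⌋. -/
/-!
Multiplying by `i` turns commuting skew-symmetric real matrices `tⱼ` into commuting Hermitian
matrices, which are simultaneously diagonalisable. Each joint eigenspace carries a real weight
`γ ∈ ℝᵏ` (`tⱼ` acts on it as `i γⱼ`), and there are at most `m` weights. Complex conjugation of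
eigenvectors shows that `-γ` is a weight whenever `γ` is, and a linear relation `∑ cⱼ γⱼ = 0`
satisfied by every weight forces `∑ cⱼ tⱼ = 0`, so the weights span `ℝᵏ`. A spanning set closed
under negation has at least twice as many elements as the dimension, hence `2k ≤ m`.
-/

open Module Submodule Module.End WithLp

theorem two_mul_finrank_span_le_card {K V : Type*} [DivisionRing K] [AddCommGroup V]
    [IsAddTorsionFree V] [Module K V] (W : Finset V) (hW : ∀ v ∈ W, -v ∈ W) :
    2 * finrank K (span K (W : Set V)) ≤ W.card := by
  classical
  induction W using Finset.strongInduction with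
  | H W ih =>
  by_cases hzero : ∀ v ∈ W, v = 0
  · rw [span_eq_bot.mpr hzero, finrank_bot]
    omega
  obtain ⟨v, hv, hv0⟩ := not_forall₂.mp hzero
  have hvv : v ≠ -v := fun h ↦ hv0 (self_eq_neg.mp h)
  set W' := W \ {v, -v}
  have hpair : ({v, -v} : Finset V) ⊆ W := Finset.insert_subset hv (by simpa using hW v hv)
  have hcard : W'.card + 2 = W.card := by
    rw [← Finset.card_pair hvv]
    exact Finset.card_sdiff_add_card_eq_card hpair
  have hW' : ∀ w ∈ W', -w ∈ W' := by
    intro w hw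
    simp only [W', Finset.mem_sdiff, Finset.mem_insert, Finset.mem_singleton] at hw ⊢
    refine ⟨hW w hw.1, ?_⟩
    rw [neg_eq_iff_eq_neg, neg_inj]
    tauto
  have hspan : span K (W : Set V) ≤ K ∙ v ⊔ span K (W' : Set V) := by
    rw [span_le]
    intro w hw
    by_cases hw' : w ∈ W'
    · exact mem_sup_right (subset_span hw')
    · have : w = v ∨ w = -v := by
        by_contra h
        exact hw' (Finset.mem_sdiff.mpr ⟨hw, by simpa using h⟩)
      rcases this with rfl | rfl
      · exact mem_sup_left (mem_span_singleton_self w)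
      · exact mem_sup_left (neg_mem (mem_span_singleton_self v))
  have ih' := ih W' (Finset.sdiff_ssubset hpair (by simp)) hW'
  calc 2 * finrank K (span K (W : Set V))
      ≤ 2 * (finrank K (K ∙ v) + finrank K (span K (W' : Set V))) :=
        Nat.mul_le_mul_left 2 ((finrank_mono hspan).trans (finrank_add_le_finrank_add_finrank _ _))
    _ ≤ W.card := by rw [finrank_span_singleton hv0]; omega

section JointEigenvalues

variable {𝕜 E ι : Type*} [RCLike 𝕜] [NormedAddCommGroup E] [InnerProductSpace 𝕜 E]

def realJointEigenvalues (T : ι → Module.End 𝕜 E) : Set (ι → ℝ) :=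
  {γ | ⨅ i, eigenspace (T i) (γ i : 𝕜) ≠ ⊥}

variable {T : ι → Module.End 𝕜 E}

theorem iSupIndep_iInf_eigenspace_ofReal (hT : ∀ i, (T i).IsSymmetric) :
    iSupIndep fun γ : ι → ℝ ↦ ⨅ i, eigenspace (T i) (γ i : 𝕜) :=
  (LinearMap.IsSymmetric.orthogonalFamily_iInf_eigenspaces hT).independent.comp
    fun _ _ h ↦ funext fun i ↦ RCLike.ofReal_injective (congrFun h i)

theorem encard_realJointEigenvalues_le [FiniteDimensional 𝕜 E] (hT : ∀ i, (T i).IsSymmetric) :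
    (realJointEigenvalues T).encard ≤ finrank 𝕜 E := by
  have hindep := iSupIndep_iInf_eigenspace_ofReal hT
  let _ := hindep.fintypeNeBotOfFiniteDimensional
  change ENat.card {γ : ι → ℝ // ⨅ i, eigenspace (T i) (γ i : 𝕜) ≠ ⊥} ≤ _
  rw [ENat.card_eq_coe_fintype_card]
  exact_mod_cast hindep.subtype_ne_bot_le_finrank

theorem exists_mem_realJointEigenvalues (hT : ∀ i, (T i).IsSymmetric) {χ : ι → 𝕜}
    (hχ : ⨅ i, eigenspace (T i) (χ i) ≠ ⊥) :
    ∃ γ ∈ realJointEigenvalues T, (fun i ↦ (γ i : 𝕜)) = χ := by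
  have hre (i : ι) : (RCLike.re (χ i) : 𝕜) = χ i := by
    refine RCLike.conj_eq_iff_re.mp ((hT i).conj_eigenvalue_eq_self (hasEigenvalue_iff.mpr ?_))
    exact fun hbot ↦ hχ (eq_bot_iff.mpr (hbot ▸ iInf_le _ i))
  exact ⟨fun i ↦ RCLike.re (χ i), by simpa [realJointEigenvalues, hre] using hχ, funext hre⟩

theorem sum_smul_apply_of_mem_iInf_eigenspace [Fintype ι] (c : ι → 𝕜) {χ : ι → 𝕜} {x : E}
    (hx : x ∈ ⨅ i, eigenspace (T i) (χ i)) :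
    (∑ i, c i • T i) x = (∑ i, c i * χ i) • x := by
  simp only [LinearMap.sum_apply, LinearMap.smul_apply, Finset.sum_smul, mul_smul]
  exact Finset.sum_congr rfl fun i _ ↦ by rw [mem_eigenspace_iff.mp ((mem_iInf _).mp hx i)]

theorem sum_smul_eq_zero_of_forall_mem_realJointEigenvalues [Fintype ι] [FiniteDimensional 𝕜 E]
    (hT : ∀ i, (T i).IsSymmetric) (hC : Pairwise fun i j ↦ Commute (T i) (T j)) (c : ι → ℝ)
    (hc : ∀ γ ∈ realJointEigenvalues T, ∑ i, c i * γ i = 0) :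
    ∑ i, (c i : 𝕜) • T i = 0 := by
  ext x
  have hx : x ∈ ⨆ χ : ι → 𝕜, ⨅ i, eigenspace (T i) (χ i) :=
    (LinearMap.IsSymmetric.iSup_iInf_eq_top_of_commute hT hC).symm ▸ mem_top
  refine iSup_induction _ (motive := fun x ↦ (∑ i, (c i : 𝕜) • T i) x = 0) hx ?_ (map_zero _)
    fun x y hx hy ↦ by rw [map_add, hx, hy, add_zero]
  intro χ x hx
  rw [sum_smul_apply_of_mem_iInf_eigenspace _ hx]
  by_cases hχ : ⨅ i, eigenspace (T i) (χ i) = ⊥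
  · rw [hχ, mem_bot] at hx
    rw [hx, smul_zero]
  obtain ⟨γ, hγ, rfl⟩ := exists_mem_realJointEigenvalues hT hχ
  have hsum : ∑ i, (c i : 𝕜) * (γ i : 𝕜) = ((∑ i, c i * γ i : ℝ) : 𝕜) := by push_cast; rfl
  rw [hsum, hc γ hγ, RCLike.ofReal_zero, zero_smul]

end JointEigenvalues

namespace Matrix

variable {m n : Type*}

def iMulOfReal : Matrix m n ℝ →ₗ[ℝ] Matrix m n ℂ where
  toFun A := Complex.I • A.map (↑)
  map_add' A B := by ext; simp [mul_add]
  map_smul' c A := by ext; simp [mul_left_comm]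

theorem iMulOfReal_apply (A : Matrix m n ℝ) (i : m) (j : n) :
    iMulOfReal A i j = Complex.I * A i j := rfl

theorem iMulOfReal_injective : Function.Injective (iMulOfReal : Matrix m n ℝ → Matrix m n ℂ) :=
  fun A B h ↦ by
    ext i j
    simpa [iMulOfReal_apply, Complex.I_ne_zero] using congrFun₂ h i j

theorem conjTranspose_iMulOfReal (A : Matrix m n ℝ) : (iMulOfReal A)ᴴ = -iMulOfReal Aᵀ := by
  ext i j
  simp [iMulOfReal_apply]

theorem isHermitian_iMulOfReal {A : Matrix n n ℝ} (hA : Aᵀ = -A) : (iMulOfReal A).IsHermitian := by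
  rw [IsHermitian, conjTranspose_iMulOfReal, hA, map_neg, neg_neg]

theorem iMulOfReal_mul_iMulOfReal [Fintype n] (A B : Matrix n n ℝ) :
    iMulOfReal A * iMulOfReal B = -(A * B).map (↑) := by
  ext i j
  simp [iMulOfReal_apply, mul_apply, ← Finset.sum_neg_distrib, mul_mul_mul_comm]

theorem commute_iMulOfReal [Fintype n] {A B : Matrix n n ℝ} (h : Commute A B) :
    Commute (iMulOfReal A) (iMulOfReal B) := by
  rw [Commute, SemiconjBy, iMulOfReal_mul_iMulOfReal, iMulOfReal_mul_iMulOfReal, h.eq]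

theorem iMulOfReal_mulVec_star [Fintype n] (A : Matrix m n ℝ) (v : n → ℂ) :
    iMulOfReal A *ᵥ star v = -star (iMulOfReal A *ᵥ v) := by
  ext i
  simp [iMulOfReal_apply, mulVec, dotProduct]

variable [Fintype n] [DecidableEq n]

theorem mem_eigenspace_toEuclideanLin_iff {M : Matrix n n ℂ} {μ : ℂ} {v : EuclideanSpace ℂ n} :
    v ∈ eigenspace (toEuclideanLin M) μ ↔ M *ᵥ ofLp v = μ • ofLp v := by
  rw [mem_eigenspace_iff, ← (ofLp_injective 2).eq_iff]
  rfl

theorem neg_mem_realJointEigenvalues_iMulOfReal {ι : Type*} (t : ι → Matrix n n ℝ) {γ : ι → ℝ}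
    (hγ : γ ∈ realJointEigenvalues fun i ↦ toEuclideanLin (iMulOfReal (t i))) :
    -γ ∈ realJointEigenvalues fun i ↦ toEuclideanLin (iMulOfReal (t i)) := by
  obtain ⟨v, hv, hv0⟩ := exists_mem_ne_zero_of_ne_bot hγ
  refine (Submodule.ne_bot_iff _).mpr ⟨toLp 2 (star (ofLp v)), (mem_iInf _).mpr fun i ↦ ?_, ?_⟩
  · have hvi := mem_eigenspace_toEuclideanLin_iff.mp ((mem_iInf _).mp hv i)
    rw [mem_eigenspace_toEuclideanLin_iff, ofLp_toLp, iMulOfReal_mulVec_star, hvi]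
    simp [star_smul]
  · simpa using hv0

theorem span_realJointEigenvalues_iMulOfReal_eq_top {ι : Type*} [Fintype ι] {t : ι → Matrix n n ℝ}
    (hskew : ∀ i, (t i)ᵀ = -(t i)) (hcomm : Pairwise fun i j ↦ Commute (t i) (t j))
    (hli : LinearIndependent ℝ t) :
    span ℝ (realJointEigenvalues fun i ↦ toEuclideanLin (iMulOfReal (t i))) = ⊤ := by
  set T := fun i ↦ toEuclideanLin (iMulOfReal (t i))
  have hT (i : ι) : (T i).IsSymmetric :=
    isSymmetric_toEuclideanLin_iff.mpr (isHermitian_iMulOfReal (hskew i))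
  have hC : Pairwise fun i j ↦ Commute (T i) (T j) := fun i j hij ↦
    (commute_iMulOfReal (hcomm hij)).map (toLpLinAlgEquiv (R := ℂ) (n := n) 2)
  rw [← Subtype.range_coe (s := realJointEigenvalues T)]
  refine span_flip_eq_top_iff_linearIndependent (f := fun i (γ : realJointEigenvalues T) ↦ γ.1 i)
    |>.mpr <| Fintype.linearIndependent_iff.mpr fun c hc ↦
      Fintype.linearIndependent_iff.mp hli c ?_
  have hTc := sum_smul_eq_zero_of_forall_mem_realJointEigenvalues hT hC c fun γ hγ ↦ by
    simpa using congrFun hc ⟨γ, hγ⟩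
  apply iMulOfReal_injective
  apply toEuclideanLin.injective
  rw [map_sum, map_zero, map_sum, map_zero]
  simp only [map_smul, ← Complex.coe_smul]
  exact hTc

end Matrix

open Matrix

theorem commuting_skew_symmetric_linearIndependent_card_le_general
    (m k : ℕ) (t : Fin k → Matrix (Fin m) (Fin m) ℝ)
    (hskew : ∀ i, (t i)ᵀ = -(t i))
    (hcomm : ∀ i j, t i * t j = t j * t i)
    (hli : LinearIndependent ℝ t) :
    k ≤ m / 2 := by
  set W := realJointEigenvalues fun i ↦ toEuclideanLin (iMulOfReal (t i))
  have hcard : W.encard ≤ m := by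
    simpa using encard_realJointEigenvalues_le fun i ↦
      isSymmetric_toEuclideanLin_iff.mpr (isHermitian_iMulOfReal (hskew i))
  have hfin : W.Finite := Set.finite_of_encard_le_coe hcard
  have hcount := two_mul_finrank_span_le_card (K := ℝ) hfin.toFinset fun γ hγ ↦ by
    simpa using neg_mem_realJointEigenvalues_iMulOfReal t (by simpa using hγ)
  rw [hfin.coe_toFinset, span_realJointEigenvalues_iMulOfReal_eq_top hskew (fun i j _ ↦ hcomm i j) hli,
    finrank_top, finrank_fin_fun] at hcount
  have : hfin.toFinset.card ≤ m := by
    rwa [hfin.encard_eq_coe_toFinset_card, Nat.cast_le] at hcard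
  omega

/-- If `t₁, …, t_k` are real `m×m` matrices that are skew-symmetric,
pairwise commuting, and linearly independent over `ℝ`, then `k ≤ ⌊m/2⌋`. -/
theorem commuting_skew_symmetric_linearIndependent_card_le
    (m k : ℕ) (hm : 1 ≤ m) (t : Fin k → Matrix (Fin m) (Fin m) ℝ)
    (hskew : ∀ i, (t i)ᵀ = -(t i))
    (hcomm : ∀ i j, t i * t j = t j * t i)
    (hli : LinearIndependent ℝ t) :
    k ≤ m / 2 :=
  commuting_skew_symmetric_linearIndependent_card_le_general m k t hskew hcomm hli
end

section
/- For every m ≥ 1, the maximal dimension of an abelian Lie subalgebra of the Lie algebra of real skew-symmetric m×m matrices is exactly ⌊m/2⌋: every Lie subalgebra L of the skew-symmetric m×m real matrices on which the Lie bracket vanishes identically satisfies dim_ℝ L ≤ ⌊m/2⌋, and there exists such an abelian Lie subalgebra of dimension exactly ⌊m/2⌋. -/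
attribute [local instance 100] LieRing.ofAssociativeRing

/-!
Simultaneously diagonalise the commuting Hermitian operators `i • A` (`A ∈ L`) on `ℂ^m`: on each
joint eigenspace, `A` acts by `i • f A` for a real linear form `f` on `L`, a joint weight. As the
matrices are real, complex conjugation exchanges the joint eigenspaces of `f` and `-f`, so the
nonzero weights come in pairs `±f`. There are at most `m` weights and they separate the points of
`L`, hence span its dual, whose dimension is therefore at most `m / 2`. Conversely, the `⌊m/2⌋`
infinitesimal rotations `E_ab - E_ba` of pairwise disjoint coordinate planes commute and are
linearly independent.
-/

open Module Module.End Submodule Matrix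

section NegClosed

variable {K V : Type*} [Field K] [CharZero K] [AddCommGroup V] [Module K V]

theorem finrank_span_le_card_div_two_of_neg_mem (s : Finset V) (hs : ∀ x ∈ s, -x ∈ s) :
    finrank K (span K (s : Set V)) ≤ s.card / 2 := by
  classical
  induction s using Finset.strongInduction with
  | H s ih =>
  by_cases h0 : ∀ x ∈ s, x = 0
  · rw [(span_eq_bot).2 h0, finrank_bot]
    exact Nat.zero_le _
  push Not at h0
  obtain ⟨x, hx, hx0⟩ := h0
  have : IsAddTorsionFree V := .of_isTorsionFree K V
  have hnx : -x ∈ s.erase x := Finset.mem_erase.2 ⟨fun h => hx0 (neg_eq_self.1 h), hs x hx⟩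
  set t := (s.erase x).erase (-x)
  have hts : t ⊂ s := ((s.erase x).erase_ssubset hnx).trans_le (s.erase_subset x)
  have hcard : t.card + 2 = s.card := by
    rw [Finset.card_erase_of_mem hnx, Finset.card_erase_of_mem hx]
    have := Finset.card_pos.2 ⟨-x, hnx⟩
    rw [Finset.card_erase_of_mem hx] at this
    omega
  have htneg : ∀ y ∈ t, -y ∈ t := by
    intro y hy
    simp only [t, Finset.mem_erase, ne_eq, neg_eq_iff_eq_neg, neg_neg] at hy ⊢
    exact ⟨hy.2.1, hy.1, hs y hy.2.2⟩
  have hspan : span K (s : Set V) ≤ span K (t : Set V) ⊔ K ∙ x := by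
    rw [span_le]
    intro y hy
    by_cases hyx : y = x ∨ y = -x
    · rcases hyx with rfl | rfl
      · exact mem_sup_right (mem_span_singleton_self y)
      · exact mem_sup_right (neg_mem (mem_span_singleton_self x))
    · push Not at hyx
      exact mem_sup_left (subset_span (by simp [t, hyx.1, hyx.2, hy]))
  calc finrank K (span K (s : Set V))
      ≤ finrank K ↥(span K (t : Set V) ⊔ K ∙ x) := finrank_mono hspan
    _ ≤ finrank K (span K (t : Set V)) + finrank K (K ∙ x) :=
        finrank_add_le_finrank_add_finrank _ _
    _ ≤ t.card / 2 + 1 := by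
        gcongr
        · exact ih t hts htneg
        · exact (finrank_span_singleton hx0).le
    _ = s.card / 2 := by omega

theorem finrank_le_card_div_two_of_separating_neg_mem [FiniteDimensional K V]
    (s : Finset (Dual K V)) (hs : ∀ f ∈ s, -f ∈ s) (hsep : ∀ v, (∀ f ∈ s, f v = 0) → v = 0) :
    finrank K V ≤ s.card / 2 := by
  have htop : span K (s : Set (Dual K V)) = ⊤ :=
    span_eq_top_of_ne_zero fun v hv => by
      by_contra! h
      exact hv (hsep v h)
  rw [← Subspace.dual_finrank_eq, ← finrank_top, ← htop]
  exact finrank_span_le_card_div_two_of_neg_mem s hs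

end NegClosed

noncomputable section JointWeights

variable {E V : Type*} [NormedAddCommGroup E] [InnerProductSpace ℂ E] [AddCommGroup V]
  [Module ℝ V]

def jointEigenspace (T : V →ₗ[ℝ] Module.End ℂ E) (f : Dual ℝ V) : Submodule ℂ E :=
  ⨅ v, eigenspace (T v) (f v : ℂ)

def jointWeights (T : V →ₗ[ℝ] Module.End ℂ E) : Set (Dual ℝ V) :=
  {f | jointEigenspace T f ≠ ⊥}

variable {T : V →ₗ[ℝ] Module.End ℂ E}

theorem exists_mem_jointWeights_of_iInf_eigenspace_ne_bot (hT : ∀ v, (T v).IsSymmetric)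
    {χ : V → ℂ} (hχ : ⨅ v, eigenspace (T v) (χ v) ≠ ⊥) :
    ∃ f ∈ jointWeights T, ∀ v, χ v = f v := by
  obtain ⟨x, hx, hx0⟩ := (Submodule.ne_bot_iff _).1 hχ
  have hTx : ∀ v, T v x = χ v • x := fun v => mem_eigenspace_iff.1 ((mem_iInf _).1 hx v)
  have hreal : ∀ v, ((χ v).re : ℂ) = χ v := fun v => Complex.conj_eq_iff_re.1 <|
    (hT v).conj_eigenvalue_eq_self (hasEigenvalue_of_hasEigenvector ⟨(mem_iInf _).1 hx v, hx0⟩)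
  have hcancel : ∀ a b : ℂ, a • x = b • x → a = b := fun a b h => smul_left_injective ℂ hx0 h
  have hadd : ∀ v w, χ (v + w) = χ v + χ w := fun v w => hcancel _ _ <| by
    simp only [add_smul, ← hTx, map_add, LinearMap.add_apply]
  have hsmul : ∀ (c : ℝ) v, χ (c • v) = c * χ v := fun c v => hcancel _ _ <| by
    simp only [mul_smul, ← hTx, map_smul, LinearMap.smul_apply, Complex.coe_smul]
  let f : Dual ℝ V :=
    { toFun := fun v => (χ v).re
      map_add' := fun v w => by rw [hadd, Complex.add_re]
      map_smul' := fun c v => by rw [hsmul, Complex.re_ofReal_mul, RingHom.id_apply, smul_eq_mul] }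
  refine ⟨f, ?_, fun v => (hreal v).symm⟩
  simpa [jointWeights, jointEigenspace, f, hreal] using hχ

theorem iSupIndep_jointEigenspace (hT : ∀ v, (T v).IsSymmetric) :
    iSupIndep (jointEigenspace T) :=
  (LinearMap.IsSymmetric.orthogonalFamily_iInf_eigenspaces hT).independent.comp
    fun _ _ hfg => LinearMap.ext fun v => Complex.ofReal_injective (congrFun hfg v)

variable [FiniteDimensional ℂ E]

theorem jointWeights_finite (hT : ∀ v, (T v).IsSymmetric) : (jointWeights T).Finite :=
  finite_ne_bot_of_iSupIndep (iSupIndep_jointEigenspace hT)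

theorem ncard_jointWeights_le (hT : ∀ v, (T v).IsSymmetric) :
    (jointWeights T).ncard ≤ finrank ℂ E := by
  have hind := iSupIndep_jointEigenspace hT
  let _ := hind.fintypeNeBotOfFiniteDimensional
  exact (Nat.card_eq_fintype_card (α := {f // jointEigenspace T f ≠ ⊥})).trans_le
    hind.subtype_ne_bot_le_finrank

theorem eq_zero_of_forall_jointWeights_apply_eq_zero (hT : ∀ v, (T v).IsSymmetric)
    (hcomm : ∀ v w, Commute (T v) (T w)) (hinj : Function.Injective T) {v : V}
    (hv : ∀ f ∈ jointWeights T, f v = 0) : v = 0 := by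
  refine hinj (LinearMap.ker_eq_top.1 (top_le_iff.1 ?_) |>.trans (map_zero T).symm)
  rw [← LinearMap.IsSymmetric.iSup_iInf_eq_top_of_commute hT fun a b _ => hcomm a b, iSup_le_iff]
  intro χ
  by_cases hχ : ⨅ w, eigenspace (T w) (χ w) = ⊥
  · simp [hχ]
  obtain ⟨f, hf, hχf⟩ := exists_mem_jointWeights_of_iInf_eigenspace_ne_bot hT hχ
  calc ⨅ w, eigenspace (T w) (χ w) ≤ eigenspace (T v) (χ v) := iInf_le _ v
    _ = LinearMap.ker (T v) := by rw [hχf, hv f hf, Complex.ofReal_zero, eigenspace_zero]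

end JointWeights

noncomputable section SkewToHermitian

open Complex

variable {n : Type*} [Fintype n]

theorem map_ofReal_mulVec_star (A : Matrix n n ℝ) (u : n → ℂ) :
    A.map (↑) *ᵥ star u = star (A.map (↑) *ᵥ u) := by
  ext i
  simp [mulVec, dotProduct, star_sum]

variable [DecidableEq n]

def skewToHermitian : Matrix n n ℝ →ₗ[ℝ] Module.End ℂ (EuclideanSpace ℂ n) :=
  (I • toEuclideanLin.toLinearMap).restrictScalars ℝ ∘ₗ ofRealAm.mapMatrix.toLinearMap

theorem skewToHermitian_apply (A : Matrix n n ℝ) :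
    skewToHermitian A = I • toEuclideanLin (A.map (↑)) := rfl

theorem skewToHermitian_apply_toLp (A : Matrix n n ℝ) (u : n → ℂ) :
    skewToHermitian A (WithLp.toLp 2 u) = WithLp.toLp 2 (I • (A.map (↑) *ᵥ u)) := by
  simp [skewToHermitian_apply]

theorem skewToHermitian_injective : Function.Injective (skewToHermitian (n := n)) := by
  rw [← LinearMap.ker_eq_bot, LinearMap.ker_eq_bot']
  intro A hA
  rw [skewToHermitian_apply, smul_eq_zero_iff_right I_ne_zero,
    LinearEquiv.map_eq_zero_iff] at hA
  exact Matrix.map_injective ofReal_injective (hA.trans (Matrix.map_zero _ rfl).symm)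

theorem isSymmetric_skewToHermitian {A : Matrix n n ℝ} (hA : Aᵀ = -A) :
    (skewToHermitian A).IsSymmetric := by
  rw [skewToHermitian_apply, ← LinearEquiv.map_smul, isSymmetric_toEuclideanLin_iff,
    IsHermitian, conjTranspose_smul, ← conjTranspose_map _ (fun _ => (conj_ofReal _).symm),
    conjTranspose_eq_transpose_of_trivial, hA, star_def, conj_I, Matrix.map_neg _ ofReal_neg,
    smul_neg, neg_smul, neg_neg]

theorem commute_skewToHermitian {A B : Matrix n n ℝ} (h : Commute A B) :
    Commute (skewToHermitian A) (skewToHermitian B) := by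
  have hc : A.map ofReal * B.map ofReal = B.map ofReal * A.map ofReal :=
    (h.map ofRealHom.mapMatrix).eq
  ext x i
  simp [skewToHermitian_apply, Module.End.mul_apply, mulVec_mulVec, hc]

theorem skewToHermitian_toLp_star {A : Matrix n n ℝ} {μ : ℝ} {u : n → ℂ}
    (h : skewToHermitian A (WithLp.toLp 2 u) = (μ : ℂ) • WithLp.toLp 2 u) :
    skewToHermitian A (WithLp.toLp 2 (star u)) = (-μ : ℂ) • WithLp.toLp 2 (star u) := by
  rw [skewToHermitian_apply_toLp, ← WithLp.toLp_smul] at h ⊢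
  have h' := congrArg star (WithLp.toLp_injective 2 h)
  rw [star_smul, star_smul, star_def, conj_I, conj_ofReal, neg_smul,
    neg_eq_iff_eq_neg] at h'
  rw [map_ofReal_mulVec_star, h', neg_smul]

theorem neg_mem_jointWeights_skewToHermitian_comp {V : Type*} [AddCommGroup V] [Module ℝ V]
    (φ : V →ₗ[ℝ] Matrix n n ℝ) {f : Dual ℝ V} (hf : f ∈ jointWeights (skewToHermitian ∘ₗ φ)) :
    -f ∈ jointWeights (skewToHermitian ∘ₗ φ) := by
  obtain ⟨x, hx, hx0⟩ := (Submodule.ne_bot_iff _).1 hf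
  refine (Submodule.ne_bot_iff _).2 ⟨WithLp.toLp 2 (star x.ofLp), (mem_iInf _).2 fun v => ?_, ?_⟩
  · rw [mem_eigenspace_iff]
    simpa using skewToHermitian_toLp_star (mem_eigenspace_iff.1 ((mem_iInf _).1 hx v))
  · simpa using hx0

theorem finrank_le_card_div_two_of_commute_of_transpose_eq_neg (S : Submodule ℝ (Matrix n n ℝ))
    (hskew : ∀ A ∈ S, Aᵀ = -A) (hcomm : ∀ A ∈ S, ∀ B ∈ S, Commute A B) :
    finrank ℝ S ≤ Fintype.card n / 2 := by
  set T := skewToHermitian ∘ₗ S.subtype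
  have hT : ∀ A, (T A).IsSymmetric := fun A => isSymmetric_skewToHermitian (hskew A A.2)
  have hfin := jointWeights_finite hT
  calc finrank ℝ S ≤ hfin.toFinset.card / 2 := by
        refine finrank_le_card_div_two_of_separating_neg_mem _ (fun f hf => ?_) fun A hA => ?_
        · simpa using neg_mem_jointWeights_skewToHermitian_comp S.subtype (by simpa using hf)
        · refine eq_zero_of_forall_jointWeights_apply_eq_zero hT
            (fun A B => commute_skewToHermitian (hcomm A A.2 B B.2))
            (skewToHermitian_injective.comp S.subtype_injective) fun f hf => hA f (by simpa)
    _ ≤ Fintype.card n / 2 := by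
        gcongr
        rw [← Set.ncard_eq_toFinset_card _ hfin, ← finrank_euclideanSpace (𝕜 := ℂ)]
        exact ncard_jointWeights_le hT

end SkewToHermitian

section SkewSingle

variable {R n : Type*} [Ring R] [DecidableEq n]

def skewSingle (i j : n) : Matrix n n R :=
  single i j 1 - single j i 1

theorem transpose_skewSingle (i j : n) : (skewSingle i j : Matrix n n R)ᵀ = -skewSingle i j := by
  simp [skewSingle, transpose_single]

variable {ι : Type*} (e : ι ⊕ ι ↪ n)

theorem linearIndependent_skewSingle_of_embedding [Fintype ι] :
    LinearIndependent R fun i => (skewSingle (e (.inl i)) (e (.inr i)) : Matrix n n R) := by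
  classical
  rw [Fintype.linearIndependent_iff]
  intro g hg i
  simpa [skewSingle, Matrix.sum_apply, single_apply] using
    congrFun (congrFun hg (e (.inl i))) (e (.inr i))

variable [Fintype n]

theorem skewSingle_mul_skewSingle_of_ne {i j k l : n} (hik : i ≠ k) (hil : i ≠ l) (hjk : j ≠ k)
    (hjl : j ≠ l) : (skewSingle i j * skewSingle k l : Matrix n n R) = 0 := by
  simp [skewSingle, sub_mul, mul_sub, single_mul_single_of_ne, hik, hil, hjk, hjl]

theorem commute_skewSingle_of_embedding (i j : ι) :
    Commute (skewSingle (e (.inl i)) (e (.inr i)) : Matrix n n R)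
      (skewSingle (e (.inl j)) (e (.inr j))) := by
  obtain rfl | hij := eq_or_ne i j
  · exact .refl _
  · rw [Commute, SemiconjBy, skewSingle_mul_skewSingle_of_ne, skewSingle_mul_skewSingle_of_ne] <;>
      simp [hij, hij.symm]

end SkewSingle

theorem exists_abelian_lieSubalgebra_so_finrank_eq {K n ι : Type*} [Field K] [Fintype n]
    [DecidableEq n] [Fintype ι] (e : ι ⊕ ι ↪ n) :
    ∃ L : LieSubalgebra K (Matrix n n K), L ≤ LieAlgebra.Orthogonal.so n K ∧
      (∀ x ∈ L, ∀ y ∈ L, ⁅x, y⁆ = 0) ∧ finrank K L = Fintype.card ι := by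
  set s := Set.range fun i => (skewSingle (e (.inl i)) (e (.inr i)) : Matrix n n K)
  have hcomm : ∀ x ∈ span K s, ∀ y ∈ span K s, Commute x y := by
    refine fun x hx y hy => Commute.span_right (fun y' hy' => Commute.span_left ?_ x hx) y hy
    rintro _ ⟨i, rfl⟩
    obtain ⟨j, rfl⟩ := hy'
    exact commute_skewSingle_of_embedding e i j
  have hspan : (LieSubalgebra.lieSpan K _ s : Submodule K (Matrix n n K)) = span K s :=
    LieSubalgebra.coe_lieSpan_eq_span_of_forall_lie_eq_zero fun x hx y hy =>
      commute_iff_lie_eq.1 (hcomm x (subset_span hx) y (subset_span hy))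
  refine ⟨LieSubalgebra.lieSpan K _ s, ?_, fun x hx y hy => ?_, ?_⟩
  · rw [LieSubalgebra.lieSpan_le]
    rintro _ ⟨i, rfl⟩
    exact (LieAlgebra.Orthogonal.mem_so _ _ _).2 (transpose_skewSingle _ _)
  · rw [← LieSubalgebra.mem_toSubmodule, hspan] at hx hy
    exact commute_iff_lie_eq.1 (hcomm x hx y hy)
  · change finrank K (LieSubalgebra.lieSpan K _ s : Submodule K (Matrix n n K)) = _
    rw [hspan, finrank_span_eq_card (linearIndependent_skewSingle_of_embedding e)]

theorem abelian_subalgebra_skewAdjoint_max_dim_general (m : ℕ) :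
    (∀ L : LieSubalgebra ℝ (Matrix (Fin m) (Fin m) ℝ),
      L ≤ skewAdjointMatricesLieSubalgebra (1 : Matrix (Fin m) (Fin m) ℝ) →
      (∀ x ∈ L, ∀ y ∈ L, ⁅x, y⁆ = (0 : Matrix (Fin m) (Fin m) ℝ)) →
      Module.finrank ℝ L ≤ m / 2) ∧
    (∃ L : LieSubalgebra ℝ (Matrix (Fin m) (Fin m) ℝ),
      L ≤ skewAdjointMatricesLieSubalgebra (1 : Matrix (Fin m) (Fin m) ℝ) ∧
      (∀ x ∈ L, ∀ y ∈ L, ⁅x, y⁆ = (0 : Matrix (Fin m) (Fin m) ℝ)) ∧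
      Module.finrank ℝ L = m / 2) := by
  refine ⟨fun L hL hab => ?_, ?_⟩
  · have := finrank_le_card_div_two_of_commute_of_transpose_eq_neg L.toSubmodule
      (fun A hA => (LieAlgebra.Orthogonal.mem_so _ _ _).1 (hL hA))
      fun A hA B hB => commute_iff_lie_eq.2 (hab A hA B hB)
    rwa [Fintype.card_fin] at this
  · obtain ⟨L, hL, hab, hdim⟩ := exists_abelian_lieSubalgebra_so_finrank_eq (K := ℝ)
      (finSumFinEquiv.toEmbedding.trans (Fin.castLEEmb (by omega : m / 2 + m / 2 ≤ m)))
    exact ⟨L, hL, hab, by rwa [Fintype.card_fin] at hdim⟩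

/-- The maximal dimension of an abelian Lie subalgebra of the Lie algebra of
real skew-symmetric `m×m` matrices is exactly `⌊m/2⌋`. -/
theorem abelian_subalgebra_skewAdjoint_max_dim (m : ℕ) (hm : 1 ≤ m) :
    (∀ L : LieSubalgebra ℝ (Matrix (Fin m) (Fin m) ℝ),
      L ≤ skewAdjointMatricesLieSubalgebra (1 : Matrix (Fin m) (Fin m) ℝ) →
      (∀ x ∈ L, ∀ y ∈ L, ⁅x, y⁆ = (0 : Matrix (Fin m) (Fin m) ℝ)) →
      Module.finrank ℝ L ≤ m / 2) ∧
    (∃ L : LieSubalgebra ℝ (Matrix (Fin m) (Fin m) ℝ),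
      L ≤ skewAdjointMatricesLieSubalgebra (1 : Matrix (Fin m) (Fin m) ℝ) ∧
      (∀ x ∈ L, ∀ y ∈ L, ⁅x, y⁆ = (0 : Matrix (Fin m) (Fin m) ℝ)) ∧
      Module.finrank ℝ L = m / 2) :=
  abelian_subalgebra_skewAdjoint_max_dim_general m
end

section
/- Let N ≥ 1 and let L be a closed subgroup of the N-dimensional torus 𝕋^N = (ℝ/ℤ)^N. Then there exist a natural number n with 0 ≤ n ≤ N and a finite abelian group F such that L, with its subspace topology and subgroup structure, is isomorphic as a topological group to 𝕋^n × F. -/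
/-!
Lift `L` to the closed subgroup `W ⊇ ℤ^N` of `ℝ^N`. Splitting off the largest linear subspace
contained in `W` leaves a lattice in a complement, so every point outside `W` is separated from
`W` by a linear functional that is integral on `W`; as the standard basis lies in `W`, such a
functional has integer coefficients. Hence `L` is cut out by the characters `z ↦ ∑ mᵢ • zᵢ`
vanishing on it. These integer vectors `m` form a subgroup of `ℤ^N`, which has a Smith normal
form: in a suitable basis of `ℤ^N` it consists of the vectors with `j`-th coordinate divisible
by `dⱼ`. The induced automorphism of `𝕋^N` carries `L` onto `∏ⱼ {y | dⱼ • y = 0}`, whose factors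
are circles where `dⱼ = 0` and finite cyclic groups otherwise.
-/

open Filter Topology Module

lemma tendsto_floor_div_mul_nhdsGT (t : ℝ) :
    Tendsto (fun r : ℝ => (⌊t / r⌋ : ℝ) * r) (𝓝[>] 0) (𝓝 t) := by
  have hlow : Tendsto (fun r : ℝ => t - r) (𝓝[>] 0) (𝓝 t) := by
    simpa using ((continuous_sub_left t).tendsto 0).mono_left nhdsWithin_le_nhds
  refine tendsto_of_tendsto_of_tendsto_of_le_of_le' hlow tendsto_const_nhds ?_ ?_ <;>
    filter_upwards [self_mem_nhdsWithin] with r (hr : 0 < r)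
  · have := (div_lt_iff₀ hr).mp (Int.lt_floor_add_one (t / r))
    linarith
  · exact (le_div_iff₀ hr).mp (Int.floor_le _)

namespace AddSubgroup

section Module

variable {E : Type*} [AddCommGroup E] [Module ℝ E] (W : AddSubgroup E)

def linealitySpace : Submodule ℝ E where
  carrier := {v | ∀ t : ℝ, t • v ∈ W}
  add_mem' hv hw t := by rw [smul_add]; exact W.add_mem (hv t) (hw t)
  zero_mem' t := by rw [smul_zero]; exact W.zero_mem
  smul_mem' c v hv t := by rw [smul_smul]; exact hv (t * c)

variable {W}

lemma mem_of_mem_linealitySpace {v : E} (hv : v ∈ W.linealitySpace) : v ∈ W := by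
  simpa using hv 1

lemma mem_iff_of_sub_mem_linealitySpace {x y : E} (h : x - y ∈ W.linealitySpace) :
    x ∈ W ↔ y ∈ W := by
  rw [← sub_add_cancel x y, W.add_mem_cancel_left (mem_of_mem_linealitySpace h)]

end Module

variable {E : Type*} [NormedAddCommGroup E] [NormedSpace ℝ E] {W : AddSubgroup E}

/-- `⌊t / ‖w‖⌋ • w ∈ W` approximates `t • (‖w‖⁻¹ • w)` as `w → 0`. -/
lemma mem_linealitySpace_of_tendsto {α : Type*} {l : Filter α} [l.NeBot]
    (hW : IsClosed (W : Set E)) {w : α → E} (hwW : ∀ᶠ a in l, w a ∈ W ∧ w a ≠ 0)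
    (hw : Tendsto w l (𝓝 0)) {u : E} (hu : Tendsto (fun a => ‖w a‖⁻¹ • w a) l (𝓝 u)) :
    u ∈ W.linealitySpace := by
  intro t
  have hnorm : Tendsto (fun a => ‖w a‖) l (𝓝[>] 0) :=
    tendsto_nhdsWithin_iff.mpr ⟨by simpa using hw.norm,
      hwW.mono fun a ha => norm_pos_iff.mpr ha.2⟩
  have hlim := ((tendsto_floor_div_mul_nhdsGT t).comp hnorm).smul hu
  refine hW.mem_of_tendsto hlim (hwW.mono fun a ha => ?_)
  have : (⌊t / ‖w a‖⌋ * ‖w a‖) • ‖w a‖⁻¹ • w a = ⌊t / ‖w a‖⌋ • w a := by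
    rw [smul_smul, mul_assoc, mul_inv_cancel₀ (norm_ne_zero_iff.mpr ha.2), mul_one,
      Int.cast_smul_eq_zsmul]
  simpa [this] using W.zsmul_mem ha.1 _

variable [FiniteDimensional ℝ E]

theorem discreteTopology_of_linealitySpace_eq_bot (hW : IsClosed (W : Set E))
    (h : W.linealitySpace = ⊥) : DiscreteTopology W := by
  rw [discreteTopology_iff_isOpen_singleton_zero, isOpen_iff_mem_nhds]
  rintro _ rfl
  suffices ((W : Set E) \ {0})ᶜ ∈ 𝓝 (0 : E) from
    (mem_nhds_subtype _ _ _).mpr ⟨_, this, fun w hw => by simpa using hw⟩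
  by_contra hne
  have : (𝓝[(W : Set E) \ {0}] (0 : E)).NeBot := ⟨by rwa [Ne, nhdsWithin, inf_principal_eq_bot]⟩
  set U := Ultrafilter.of (𝓝[(W : Set E) \ {0}] (0 : E))
  have hUW : ∀ᶠ w in (U : Filter E), w ∈ W ∧ w ≠ 0 :=
    Ultrafilter.of_le _ self_mem_nhdsWithin
  obtain ⟨u, hu, hUu⟩ := (isCompact_sphere (0 : E) 1).ultrafilter_le_nhds
    (U.map fun w => ‖w‖⁻¹ • w) (by
      refine le_principal_iff.mpr (hUW.mono fun w hw => ?_)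
      simp [norm_smul, inv_mul_cancel₀ (norm_ne_zero_iff.mpr hw.2)])
  have hu0 : u ∈ W.linealitySpace := mem_linealitySpace_of_tendsto hW hUW
    ((Ultrafilter.of_le _).trans nhdsWithin_le_nhds) hUu
  simp [h] at hu0
  simp [hu0] at hu

theorem discreteTopology_comap_of_isCompl (hW : IsClosed (W : Set E)) {V' : Submodule ℝ E}
    (hV' : IsCompl W.linealitySpace V') :
    DiscreteTopology (W.toIntSubmodule.comap (V'.subtype.restrictScalars ℤ)) := by
  refine discreteTopology_of_linealitySpace_eq_bot
    (W := (W.toIntSubmodule.comap (V'.subtype.restrictScalars ℤ)).toAddSubgroup)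
    (hW.preimage continuous_subtype_val) (eq_bot_iff.mpr fun u hu => ?_)
  have hu' : (u : E) ∈ W.linealitySpace ⊓ V' := ⟨fun t => hu t, u.2⟩
  simpa [hV'.inf_eq_bot] using hu'

/-- Writing `W = linealitySpace ⊕ (W ∩ V')`, the lattice `W ∩ V'` of `V'` has integral coordinates
in a `ℤ`-basis; a coordinate in which the projection of `x` is not integral separates `x`. -/
theorem exists_dual_integral_of_notMem (hW : IsClosed (W : Set E))
    (hspan : Submodule.span ℝ (W : Set E) = ⊤) {x : E} (hx : x ∉ W) :
    ∃ f : Dual ℝ E, (∀ w ∈ W, f w ∈ Set.range ((↑) : ℤ → ℝ)) ∧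
      f x ∉ Set.range ((↑) : ℤ → ℝ) := by
  obtain ⟨V', hV'⟩ := W.linealitySpace.exists_isCompl
  set p := V'.projectionOnto W.linealitySpace hV'.symm
  set Λ : Submodule ℤ V' := W.toIntSubmodule.comap (V'.subtype.restrictScalars ℤ)
  have hΛ : ∀ y, p y ∈ Λ ↔ y ∈ W := fun y => by
    have hpy : (p y : E) = y - W.linealitySpace.projection V' hV' y :=
      Submodule.projection_eq_self_sub_projection hV' y
    refine (mem_iff_of_sub_mem_linealitySpace ?_).symm
    show y - (p y : E) ∈ _
    rw [hpy, sub_sub_cancel]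
    exact Submodule.projection_apply_mem _ _
  have : DiscreteTopology Λ := discreteTopology_comap_of_isCompl hW hV'
  have : IsZLattice ℝ Λ := by
    refine ⟨eq_top_iff.mpr ?_⟩
    calc ⊤ = (Submodule.span ℝ (W : Set E)).map p := by
          rw [hspan, Submodule.map_top, Submodule.range_projectionOnto]
      _ = Submodule.span ℝ (p '' W) := Submodule.map_span _ _
      _ ≤ Submodule.span ℝ Λ := Submodule.span_mono (by
          rintro _ ⟨w, hw, rfl⟩; exact (hΛ w).mpr hw)
  set b := (Free.chooseBasis ℤ Λ).ofZLatticeBasis ℝ Λ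
  have hb : ∀ y, y ∈ W ↔ ∀ i, b.repr (p y) i ∈ Set.range ((↑) : ℤ → ℝ) := fun y => by
    have := b.mem_span_iff_repr_mem ℤ (p y)
    rw [(Free.chooseBasis ℤ Λ).ofZLatticeBasis_span ℝ Λ, hΛ] at this
    simpa using this
  obtain ⟨i, hi⟩ := not_forall.mp ((hb x).not.mp hx)
  exact ⟨b.coord i ∘ₗ p, fun w hw => (hb w).mp hw i, hi⟩

end AddSubgroup

theorem Submodule.exists_basis_mem_iff_forall_dvd {R M ι : Type*} [CommRing R] [IsDomain R]
    [IsPrincipalIdealRing R] [AddCommGroup M] [Module R M] [Finite ι] (b : Basis ι R M)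
    (N : Submodule R M) :
    ∃ (b' : Basis ι R M) (d : ι → R), ∀ m, m ∈ N ↔ ∀ i, d i ∣ b'.repr m i := by
  have := Fintype.ofFinite ι
  obtain ⟨n, snf⟩ := N.smithNormalForm b
  refine ⟨snf.bM, Function.extend snf.f snf.a 0, fun m => ⟨fun hm i => ?_, fun h => ?_⟩⟩
  · by_cases hi : i ∈ Set.range snf.f
    · obtain ⟨k, rfl⟩ := hi
      rw [snf.f.injective.extend_apply, snf.repr_apply_embedding_eq_repr_smul ⟨m, hm⟩, map_smul]
      exact Dvd.intro _ rfl
    · rw [snf.repr_eq_zero_of_notMem_range ⟨m, hm⟩ hi]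
      exact dvd_zero _
  · rw [← snf.bM.sum_repr m]
    refine N.sum_mem fun i _ => ?_
    by_cases hi : i ∈ Set.range snf.f
    · obtain ⟨k, rfl⟩ := hi
      obtain ⟨c, hc⟩ := h (snf.f k)
      rw [snf.f.injective.extend_apply] at hc
      rw [hc, mul_comm, mul_smul, ← snf.snf]
      exact N.smul_mem _ (snf.bN k).2
    · have := h i
      rw [Function.extend_apply' _ _ _ (by simpa using hi), Pi.zero_apply, zero_dvd_iff] at this
      simp [this]

def ContinuousAddEquiv.addSubgroupCongr {G H : Type*} [AddGroup G] [AddGroup H]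
    [TopologicalSpace G] [TopologicalSpace H] (e : G ≃ₜ+ H) {A : AddSubgroup G}
    {B : AddSubgroup H} (h : ∀ x, e x ∈ B ↔ x ∈ A) : A ≃ₜ+ B where
  toFun x := ⟨e x, (h x).mpr x.2⟩
  invFun y := ⟨e.symm y, (h _).mp (by simp)⟩
  left_inv x := by simp
  right_inv y := by simp
  map_add' x y := by ext; simp
  continuous_toFun := (e.continuous.comp continuous_subtype_val).subtype_mk _
  continuous_invFun := (e.symm.continuous.comp continuous_subtype_val).subtype_mk _

variable {ι : Type*} {G : Type*} [AddCommGroup G]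

namespace AddSubgroup

def annihilator [Fintype ι] (L : AddSubgroup (ι → G)) : Submodule ℤ (ι → ℤ) :=
  ⨅ z ∈ L, LinearMap.ker (Fintype.linearCombination ℤ z)

lemma mem_annihilator [Fintype ι] {L : AddSubgroup (ι → G)} {m : ι → ℤ} :
    m ∈ L.annihilator ↔ ∀ z ∈ L, Fintype.linearCombination ℤ z m = 0 := by
  simp [annihilator]

def piTorsionBy (d : ι → ℤ) : AddSubgroup (ι → G) :=
  pi Set.univ fun j => (Submodule.torsionBy ℤ G (d j)).toAddSubgroup

lemma mem_piTorsionBy {d : ι → ℤ} {y : ι → G} : y ∈ piTorsionBy d ↔ ∀ j, d j • y j = 0 := by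
  simp [piTorsionBy, mem_pi]

variable [TopologicalSpace G]

def piTorsionByEquivProd {κ : Type*} (d : ι → ℤ) [DecidablePred fun j => d j = 0]
    (σ : κ ≃ {j // d j = 0}) :
    piTorsionBy (G := G) d ≃ₜ+ (κ → G) × piTorsionBy (G := G) fun j : {j // d j ≠ 0} => d j where
  toFun y := (fun k => (y : ι → G) (σ k),
    ⟨fun j => (y : ι → G) j, mem_piTorsionBy.mpr fun j => mem_piTorsionBy.mp y.2 j⟩)
  invFun p :=
    ⟨fun j => if h : d j = 0 then p.1 (σ.symm ⟨j, h⟩) else (p.2 : {j // d j ≠ 0} → G) ⟨j, h⟩,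
      mem_piTorsionBy.mpr fun j => by
        split_ifs with h
        · simp [h]
        · exact mem_piTorsionBy.mp p.2.2 (⟨j, h⟩ : {j // d j ≠ 0})⟩
  left_inv y := by
    ext j
    dsimp only
    split_ifs with h <;> simp
  right_inv p := by
    ext k
    · simp [(σ k).2]
    · simp [(k : _).2]
  map_add' _ _ := rfl
  continuous_toFun := by
    refine Continuous.prodMk ?_ (Continuous.subtype_mk ?_ _) <;>
      exact continuous_pi fun _ => (continuous_apply _).comp continuous_subtype_val
  continuous_invFun := by
    refine Continuous.subtype_mk (continuous_pi fun j => ?_) _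
    split_ifs
    · fun_prop
    · exact (continuous_apply _).comp (continuous_subtype_val.comp continuous_snd)

end AddSubgroup

section Pairing

variable [Fintype ι] [TopologicalSpace G] [IsTopologicalAddGroup G]

lemma continuous_sum_zsmul_apply {κ : Type*} (c : κ → ι → ℤ) :
    Continuous fun (z : ι → G) k => ∑ i, c k i • z i :=
  continuous_pi fun _ => continuous_finsetSum _ fun i _ => (continuous_apply i).zsmul _

namespace Module.Basis

variable [DecidableEq ι] (b : Basis ι ℤ (ι → ℤ))

noncomputable def pairingEquiv : (ι → G) ≃ₜ+ (ι → G) where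
  toAddEquiv := (((Pi.basisFun ℤ ι).constr ℤ).trans (b.constr ℤ).symm).toAddEquiv
  continuous_toFun := by
    convert continuous_sum_zsmul_apply (G := G) fun j => b j using 1
    ext z j
    simp [constr_apply_fintype]
  continuous_invFun := by
    convert continuous_sum_zsmul_apply (G := G) fun i => b.equivFun (Pi.single i 1) using 1
    ext y i
    simp [constr_apply_fintype]

lemma pairingEquiv_apply (z : ι → G) (j : ι) :
    b.pairingEquiv z j = Fintype.linearCombination ℤ z (b j) := by
  simp [pairingEquiv, constr_apply_fintype, Fintype.linearCombination_apply]

lemma linearCombination_eq_sum_repr_smul_pairingEquiv (z : ι → G) (m : ι → ℤ) :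
    Fintype.linearCombination ℤ z m = ∑ j, b.repr m j • b.pairingEquiv z j := by
  simp_rw [pairingEquiv_apply, ← map_zsmul, ← map_sum, b.sum_repr]

lemma forall_linearCombination_eq_zero_iff {M : Submodule ℤ (ι → ℤ)} {d : ι → ℤ}
    (hM : ∀ m, m ∈ M ↔ ∀ i, d i ∣ b.repr m i) (z : ι → G) :
    (∀ m ∈ M, Fintype.linearCombination ℤ z m = 0) ↔
      b.pairingEquiv z ∈ AddSubgroup.piTorsionBy d := by
  rw [AddSubgroup.mem_piTorsionBy]
  refine ⟨fun h j => ?_, fun h m hm => ?_⟩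
  · have hj : d j • b j ∈ M := (hM _).mpr fun i => by
      rw [map_zsmul, b.repr_self]
      by_cases hi : i = j <;> simp [hi]
    rw [pairingEquiv_apply, ← map_zsmul]
    exact h _ hj
  · rw [linearCombination_eq_sum_repr_smul_pairingEquiv]
    refine Finset.sum_eq_zero fun j _ => ?_
    obtain ⟨c, hc⟩ := (hM m).mp hm j
    rw [hc, mul_comm, mul_smul, h j, smul_zero]

end Module.Basis

end Pairing

namespace AddCircle

lemma coe_eq_zero_iff_mem_range_intCast {x : ℝ} :
    (x : AddCircle (1 : ℝ)) = 0 ↔ x ∈ Set.range ((↑) : ℤ → ℝ) := by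
  rw [AddCircle.coe_eq_zero_iff]
  simp

lemma linearCombination_coe [Fintype ι] (m : ι → ℤ) (y : ι → ℝ) :
    Fintype.linearCombination ℤ (fun i => (y i : AddCircle (1 : ℝ))) m =
      ((∑ i, (m i : ℝ) * y i : ℝ) : AddCircle (1 : ℝ)) := by
  simp only [Fintype.linearCombination_apply, ← zsmul_eq_mul]
  exact (QuotientAddGroup.mk_sum _ _).symm

lemma finite_piTorsionBy {d : ι → ℤ} [Finite ι] (hd : ∀ j, d j ≠ 0) :
    Finite (AddSubgroup.piTorsionBy (G := AddCircle (1 : ℝ)) d) := by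
  refine Set.Finite.to_subtype <| (Set.Finite.pi fun j =>
    finite_torsion 1 (Int.natAbs_pos.mpr (hd j))).subset fun y hy j _ => ?_
  simpa using AddSubgroup.mem_piTorsionBy.mp hy j

end AddCircle

theorem AddSubgroup.mem_iff_forall_mem_annihilator [Fintype ι]
    {L : AddSubgroup (ι → AddCircle (1 : ℝ))}
    (hL : IsClosed (L : Set (ι → AddCircle (1 : ℝ)))) {z : ι → AddCircle (1 : ℝ)} :
    z ∈ L ↔ ∀ m ∈ L.annihilator, Fintype.linearCombination ℤ z m = 0 := by
  refine ⟨fun hz m hm => mem_annihilator.mp hm z hz, fun h => by_contra fun hz => ?_⟩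
  classical
  set π : (ι → ℝ) →+ (ι → AddCircle (1 : ℝ)) := (QuotientAddGroup.mk' _).compLeft ι
  set W := L.comap π
  have hπ : Continuous π :=
    continuous_pi fun i => (AddCircle.continuous_mk' 1).comp (continuous_apply i)
  have hsingle : ∀ i, Pi.single i 1 ∈ W := fun i => by
    have : π (Pi.single i 1) = 0 := funext fun j => by
      by_cases hj : j = i <;> simp [π, hj]
    simp [W, this]
  have hspan : Submodule.span ℝ (W : Set (ι → ℝ)) = ⊤ := by
    rw [eq_top_iff, ← (Pi.basisFun ℝ ι).span_eq]
    exact Submodule.span_mono (Set.range_subset_iff.mpr fun i => by simpa using hsingle i)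
  obtain ⟨x, rfl⟩ := QuotientAddGroup.mk_surjective.comp_left z
  obtain ⟨f, hfW, hfx⟩ := W.exists_dual_integral_of_notMem (hL.preimage hπ) hspan (x := x) hz
  choose m hm using fun i => hfW _ (hsingle i)
  have hf : ∀ y, Fintype.linearCombination ℤ (π y) m = (f y : AddCircle (1 : ℝ)) := fun y => by
    have : f y = ∑ i, (m i : ℝ) * y i := by
      conv_lhs => rw [← (Pi.basisFun ℝ ι).sum_repr y]
      simp [← hm, mul_comm]
    rw [this, ← AddCircle.linearCombination_coe]
    rfl
  refine hfx (AddCircle.coe_eq_zero_iff_mem_range_intCast.mp ?_)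
  rw [← hf]
  refine h m (mem_annihilator.mpr fun w hw => ?_)
  obtain ⟨y, rfl⟩ := QuotientAddGroup.mk_surjective.comp_left w
  exact (hf y).trans (AddCircle.coe_eq_zero_iff_mem_range_intCast.mpr (hfW y hw))

theorem closed_subgroup_of_torus_iso_subtorus_prod_finite_general
    (N : ℕ)
    (L : AddSubgroup (Fin N → AddCircle (1 : ℝ)))
    (hL : IsClosed (L : Set (Fin N → AddCircle (1 : ℝ)))) :
    ∃ (n : ℕ), n ≤ N ∧
      ∃ (F : Type) (_ : AddCommGroup F) (_ : Fintype F) (_ : TopologicalSpace F),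
        DiscreteTopology F ∧
        ∃ e : L ≃+ ((Fin n → AddCircle (1 : ℝ)) × F),
          Continuous e ∧ Continuous e.symm := by
  obtain ⟨b, d, hd⟩ := L.annihilator.exists_basis_mem_iff_forall_dvd (Pi.basisFun ℤ (Fin N))
  have hL' : ∀ z, b.pairingEquiv z ∈ AddSubgroup.piTorsionBy d ↔ z ∈ L := fun z => by
    rw [AddSubgroup.mem_iff_forall_mem_annihilator hL, b.forall_linearCombination_eq_zero_iff hd]
  set F := AddSubgroup.piTorsionBy (G := AddCircle (1 : ℝ)) fun j : {j // d j ≠ 0} => d j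
  have : Finite F := AddCircle.finite_piTorsionBy fun j => j.2
  let e := ((b.pairingEquiv (G := AddCircle (1 : ℝ))).addSubgroupCongr hL').trans
    (AddSubgroup.piTorsionByEquivProd d (Fintype.equivFin {j // d j = 0}).symm)
  exact ⟨_, (Fintype.card_subtype_le _).trans_eq (Fintype.card_fin N), F, inferInstance,
    Fintype.ofFinite F, inferInstance, inferInstance, e.toAddEquiv, e.continuous,
    e.symm.continuous⟩

/-- Every closed subgroup of the torus `𝕋^N = (ℝ/ℤ)^N` is isomorphic, as a
topological group, to `𝕋^n × F` for some `n ≤ N` and some finite abelian group `F`. -/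
theorem closed_subgroup_of_torus_iso_subtorus_prod_finite
    (N : ℕ) (hN : 1 ≤ N)
    (L : AddSubgroup (Fin N → AddCircle (1 : ℝ)))
    (hL : IsClosed (L : Set (Fin N → AddCircle (1 : ℝ)))) :
    ∃ (n : ℕ), n ≤ N ∧
      ∃ (F : Type) (_ : AddCommGroup F) (_ : Fintype F) (_ : TopologicalSpace F),
        DiscreteTopology F ∧
        ∃ e : L ≃+ ((Fin n → AddCircle (1 : ℝ)) × F),
          Continuous e ∧ Continuous e.symm :=
  closed_subgroup_of_torus_iso_subtorus_prod_finite_general N L hL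
end

section
/- Let n ≥ 1, let f and f̃ be real symmetric positive definite n×n matrices, and let χ, χ̃ ∈ ℝⁿ. Let Φ and Φ̃ be the (n+1)×(n+1) matrices Φ = [[(det f)^{−1}, −(det f)^{−1} χᵀ], [−(det f)^{−1} χ, f + (det f)^{−1} χ χᵀ]] and Φ̃ = [[(det f̃)^{−1}, −(det f̃)^{−1} χ̃ᵀ], [−(det f̃)^{−1} χ̃, f̃ + (det f̃)^{−1} χ̃ χ̃ᵀ]]. Then Tr(Φ̃ · Φ^{−1}) − (n+1) = −1 + (det f)/(det f̃) + (det f̃)^{−1} · (χ − χ̃)ᵀ f^{−1} (χ − χ̃) + Tr(f^{−1} · (f̃ − f)). -/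
open Matrix

/-- The `(n+1)×(n+1)` block matrix
`Φ = [[(det f)⁻¹, −(det f)⁻¹ χᵀ], [−(det f)⁻¹ χ, f + (det f)⁻¹ χ χᵀ]]`
built from an `n×n` matrix `f` and a vector `χ`. -/
noncomputable def mazurMatrix {n : ℕ} (f : Matrix (Fin n) (Fin n) ℝ) (χ : Fin n → ℝ) :
    Matrix (Fin (n + 1)) (Fin (n + 1)) ℝ :=
  Matrix.of fun i j =>
    if hi : i = 0 then
      if hj : j = 0 then (f.det)⁻¹
      else -(f.det)⁻¹ * χ (j.pred hj)
    else
      if hj : j = 0 then -(f.det)⁻¹ * χ (i.pred hi)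
      else f (i.pred hi) (j.pred hj) + (f.det)⁻¹ * χ (i.pred hi) * χ (j.pred hj)

noncomputable def mazurInv {n : ℕ} (f : Matrix (Fin n) (Fin n) ℝ) (χ : Fin n → ℝ) :
    Matrix (Fin (n + 1)) (Fin (n + 1)) ℝ :=
  Matrix.of fun i j =>
    if hi : i = 0 then
      if hj : j = 0 then f.det + χ ⬝ᵥ f⁻¹.mulVec χ
      else f⁻¹.mulVec χ (j.pred hj)
    else
      if hj : j = 0 then f⁻¹.mulVec χ (i.pred hi)
      else f⁻¹ (i.pred hi) (j.pred hj)

theorem mazur_right_inv (n : ℕ)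
    (f : Matrix (Fin n) (Fin n) ℝ) (hf : f.PosDef) (χ : Fin n → ℝ) :
    mazurMatrix f χ * mazurInv f χ = 1 := by
  have hd : f.det ≠ 0 := ne_of_gt hf.det_pos
  have hu : IsUnit f.det := isUnit_iff_ne_zero.mpr hd
  have hfg : f * f⁻¹ = 1 := f.mul_nonsing_inv hu
  have hsymm : f⁻¹ᵀ = f⁻¹ := by
    rw [f.transpose_nonsing_inv]
    congr 1
    have := hf.isHermitian.eq
    simpa using this
  have hsym : ∀ i j, f⁻¹ i j = f⁻¹ j i := fun i j => by
    conv_lhs => rw [← hsymm]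
    rfl
  have hA : ∀ j, (f⁻¹ *ᵥ χ) j = ∑ x, χ x * f⁻¹ x j := by
    intro j
    simp only [Matrix.mulVec, dotProduct]
    exact Finset.sum_congr rfl fun x _ => by rw [hsym j x]; ring
  have hB : ∀ i j, ∑ x, f i x * f⁻¹ x j = if i = j then (1:ℝ) else 0 := by
    intro i j
    have := congrFun (congrFun hfg i) j
    simpa [Matrix.mul_apply, Matrix.one_apply] using this
  have hC : ∀ i, ∑ x, f i x * (f⁻¹ *ᵥ χ) x = χ i := by
    intro i
    have h2 : f *ᵥ (f⁻¹ *ᵥ χ) = χ := by rw [Matrix.mulVec_mulVec, hfg, Matrix.one_mulVec]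
    simpa [Matrix.mulVec, dotProduct] using congrFun h2 i
  have hq : χ ⬝ᵥ f⁻¹ *ᵥ χ = ∑ x, χ x * (f⁻¹ *ᵥ χ) x := rfl
  ext i j
  rw [Matrix.mul_apply, Fin.sum_univ_succ]
  refine Fin.cases ?_ (fun i => ?_) i <;> refine Fin.cases ?_ (fun j => ?_) j
  · simp [mazurMatrix, mazurInv, Fin.succ_ne_zero, mul_add, dotProduct,
      Finset.mul_sum, Matrix.one_apply]
    ring_nf
    exact mul_inv_cancel₀ hd
  · simp [mazurMatrix, mazurInv, Fin.succ_ne_zero, Matrix.one_apply,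
      (Fin.succ_ne_zero j).symm]
    rw [hA j, Finset.mul_sum]
    ring_nf
  · simp [mazurMatrix, mazurInv, Fin.succ_ne_zero, Matrix.one_apply]
    have e2 : ∑ x, f.det⁻¹ * χ i * χ x * (f⁻¹ *ᵥ χ) x
        = f.det⁻¹ * χ i * (χ ⬝ᵥ f⁻¹ *ᵥ χ) := by
      rw [hq, Finset.mul_sum]
      exact Finset.sum_congr rfl fun x _ => by ring
    simp only [add_mul, Finset.sum_add_distrib, hC, e2]
    field_simp
    ring
  · simp [mazurMatrix, mazurInv, Fin.succ_ne_zero, Matrix.one_apply]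
    have e : ∑ x, (f i x + f.det⁻¹ * χ i * χ x) * f⁻¹ x j
        = (if i = j then (1:ℝ) else 0) + f.det⁻¹ * χ i * (f⁻¹ *ᵥ χ) j := by
      rw [hA j, Finset.mul_sum, ← hB i j, ← Finset.sum_add_distrib]
      exact Finset.sum_congr rfl fun x _ => by ring
    rw [e]
    ring


/-- The Mazur quantity `σ = Tr(Φ̃ Φ⁻¹) − (n+1)` built from two pairs
`(f, χ)` and `(f̃, χ̃)` equals
`−1 + det f/det f̃ + (det f̃)⁻¹ (χ−χ̃)ᵀ f⁻¹ (χ−χ̃) + Tr(f⁻¹ (f̃−f))`. -/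
theorem mazur_sigma_formula
    (n : ℕ) (hn : 1 ≤ n)
    (f ftilde : Matrix (Fin n) (Fin n) ℝ) (hf : f.PosDef) (hft : ftilde.PosDef)
    (χ χtilde : Fin n → ℝ) :
    (mazurMatrix ftilde χtilde * (mazurMatrix f χ)⁻¹).trace - ((n : ℝ) + 1) =
      -1 + f.det / ftilde.det
        + (ftilde.det)⁻¹ * ((χ - χtilde) ⬝ᵥ f⁻¹.mulVec (χ - χtilde))
        + (f⁻¹ * (ftilde - f)).trace := by
  have hd : f.det ≠ 0 := ne_of_gt hf.det_pos
  have hdt : ftilde.det ≠ 0 := ne_of_gt hft.det_pos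
  have hu : IsUnit f.det := isUnit_iff_ne_zero.mpr hd
  have hinv : (mazurMatrix f χ)⁻¹ = mazurInv f χ :=
    Matrix.inv_eq_right_inv (mazur_right_inv n f hf χ)
  rw [hinv]
  have hsymm : f⁻¹ᵀ = f⁻¹ := by
    rw [f.transpose_nonsing_inv]
    congr 1
    have := hf.isHermitian.eq
    simpa using this
  have hsym : ∀ i j, f⁻¹ i j = f⁻¹ j i := fun i j => by
    conv_lhs => rw [← hsymm]
    rfl
  have hA : ∀ (v : Fin n → ℝ) j, (f⁻¹ *ᵥ v) j = ∑ x, v x * f⁻¹ x j := by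
    intro v j
    simp only [Matrix.mulVec, dotProduct]
    exact Finset.sum_congr rfl fun x _ => by rw [hsym j x]; ring
  have htr : (mazurMatrix ftilde χtilde * mazurInv f χ).trace
      = (ftilde.det)⁻¹ * (f.det + χ ⬝ᵥ f⁻¹ *ᵥ χ)
        - (ftilde.det)⁻¹ * (χtilde ⬝ᵥ f⁻¹ *ᵥ χ)
        - (ftilde.det)⁻¹ * (χtilde ⬝ᵥ f⁻¹ *ᵥ χ)
        + (ftilde.det)⁻¹ * (χtilde ⬝ᵥ f⁻¹ *ᵥ χtilde)
        + (f⁻¹ * ftilde).trace := by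
    simp [Matrix.trace, Matrix.diag, Matrix.mul_apply, mazurMatrix, mazurInv,
      Fin.sum_univ_succ, Fin.succ_ne_zero, dotProduct]
    have e1 : ∀ x : Fin n, ∑ y, (ftilde x y + ftilde.det⁻¹ * χtilde x * χtilde y) * f⁻¹ y x
        = (∑ y, ftilde x y * f⁻¹ y x) + ftilde.det⁻¹ * χtilde x * (f⁻¹ *ᵥ χtilde) x := by
      intro x
      rw [hA χtilde x, Finset.mul_sum, ← Finset.sum_add_distrib]
      exact Finset.sum_congr rfl fun y _ => by ring
    have e2 : ∑ x : Fin n, ∑ y : Fin n, ftilde x y * f⁻¹ y x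
        = ∑ x : Fin n, ∑ j : Fin n, f⁻¹ x j * ftilde j x := by
      rw [Finset.sum_comm]
      exact Finset.sum_congr rfl fun x _ => Finset.sum_congr rfl fun y _ => mul_comm _ _
    simp only [e1, Finset.sum_add_distrib]
    rw [e2]
    simp only [mul_assoc, ← Finset.mul_sum, Finset.sum_neg_distrib]
    ring
  have hcomm : χ ⬝ᵥ f⁻¹ *ᵥ χtilde = χtilde ⬝ᵥ f⁻¹ *ᵥ χ := by
    rw [Matrix.dotProduct_mulVec, ← Matrix.mulVec_transpose, hsymm, dotProduct_comm]
  have hgf : f⁻¹ * f = 1 := f.nonsing_inv_mul hu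
  have htr2 : (f⁻¹ * (ftilde - f)).trace = (f⁻¹ * ftilde).trace - n := by
    rw [Matrix.mul_sub, Matrix.trace_sub, hgf, Matrix.trace_one]
    simp
  have hdot : (χ - χtilde) ⬝ᵥ f⁻¹ *ᵥ (χ - χtilde)
      = χ ⬝ᵥ f⁻¹ *ᵥ χ - χtilde ⬝ᵥ f⁻¹ *ᵥ χ - χtilde ⬝ᵥ f⁻¹ *ᵥ χ + χtilde ⬝ᵥ f⁻¹ *ᵥ χtilde := by
    rw [Matrix.mulVec_sub, sub_dotProduct, dotProduct_sub, dotProduct_sub, hcomm]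
    ring
  rw [htr, htr2, hdot]
  field_simp
  ring
end
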